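/- arXiv:1908.11539 — 3 statements merged into one kernel-verified Lean document; each statement's English description precedes it below -/
import Mathlib

section
/- Let F(x,λ) = λ³ − 2(3x+28x²)·λ² + 16(−3x² − 12x³ + 4x⁴)·λ + 3072x⁶. Then F(1,λ) = (λ−64)(λ−6)(λ+8), so 64 is a root of F(1,·) of multiplicity one whose value strictly exceeds the modulus of every other root. Moreover, if δ > 0 and λ : (1−δ, 1+δ) → ℝ is twice differentiable with λ(1) = 64 and F(x, λ(x)) = 0 for all x ∈ (1−δ, 1+δ), then e := λ′(1)/64 = 160/87 and v := (−λ′(1)² + 64·λ″(1) + 64·λ′(1))/64² = 269092/1975509 > 0. -/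
/-!
Differentiating `F(x, λ(x)) = 0` once and twice at `x = 1` gives equations that are linear in
`λ'(1)` and `λ''(1)` respectively, both with leading coefficient `∂F/∂λ (1, 64) = 4176`, which is
nonzero because `64` is a simple root of `F(1, ·)`; solving them yields `e` and `v`.
-/

open Polynomial Set Filter Topology
open scoped Polynomial.Bivariate

namespace Polynomial.Bivariate

section CommSemiring

variable {R : Type*} [CommSemiring R]

/-- The partial derivative in the inner variable `X`; `derivative` is the one in `Y`. -/
noncomputable def derivX : R[X][Y] →ₗ[R] R[X][Y] :=
  swap.toLinearMap ∘ₗ (derivative (R := R[X])).restrictScalars R ∘ₗ swap.toLinearMap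

theorem derivX_monomial (n : ℕ) (a : R[X]) :
    derivX (monomial n a) = monomial n (derivative a) := by
  change swap (derivative (swap (monomial n a))) = _
  rw [swap_monomial, derivative_mul, derivative_C, mul_zero, add_zero, derivative_map,
    map_mul, swap_map_C, swap_C, Polynomial.map_pow, map_X, C_mul_X_pow_eq_monomial]

theorem derivX_C_mul_X_pow (a : R[X]) (n : ℕ) :
    derivX (C a * Y ^ n) = C (derivative a) * Y ^ n := by
  simp only [C_mul_X_pow_eq_monomial, derivX_monomial]

theorem derivX_C_mul_X (a : R[X]) : derivX (C a * Y) = C (derivative a) * Y := by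
  simpa using derivX_C_mul_X_pow a 1

theorem derivX_X_pow (n : ℕ) : derivX (Y ^ n : R[X][Y]) = 0 := by
  simpa using derivX_C_mul_X_pow (1 : R[X]) n

theorem derivX_C (a : R[X]) : derivX (C a) = C (derivative a) := by
  simpa using derivX_C_mul_X_pow a 0

/-- The derivative of `x ↦ p(x, f x)` at a point where `f x = y` and `f' x = y'`. -/
noncomputable def totalDeriv (p : R[X][Y]) (x y y' : R) : R :=
  (derivative p).evalEval x y * y' + (derivX p).evalEval x y

/-- The second derivative of `x ↦ p(x, f x)` at a point where `f x = y`, `f' x = y'`,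
`f'' x = y''`. -/
noncomputable def secondTotalDeriv (p : R[X][Y]) (x y y' y'' : R) : R :=
  totalDeriv (derivative p) x y y' * y' + (derivative p).evalEval x y * y'' +
    totalDeriv (derivX p) x y y'

end CommSemiring

section Calculus

variable {𝕜 : Type*} [NontriviallyNormedField 𝕜] {f : 𝕜 → 𝕜} {x : 𝕜}

theorem hasDerivAt_evalEval (p : 𝕜[X][Y]) {f' : 𝕜} (hf : HasDerivAt f f' x) :
    HasDerivAt (fun y => p.evalEval y (f y)) (totalDeriv p x (f x) f') x := by
  induction p using Polynomial.induction_on' with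
  | add p q hp hq =>
    simp only [evalEval_add]
    exact (hp.add hq).congr_deriv (by simp only [totalDeriv, map_add, evalEval_add]; ring)
  | monomial n a =>
    simp only [totalDeriv, derivX_monomial, derivative_monomial, evalEval, eval_monomial,
      eval_mul, eval_pow, eval_C, eval_natCast]
    exact ((a.hasDerivAt x).mul (hf.fun_pow n)).congr_deriv (by ring)

theorem hasDerivAt_totalDeriv (p : 𝕜[X][Y]) {f' : 𝕜 → 𝕜} {f'' : 𝕜}
    (hf : HasDerivAt f (f' x) x) (hf' : HasDerivAt f' f'' x) :
    HasDerivAt (fun y => totalDeriv p y (f y) (f' y))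
      (secondTotalDeriv p x (f x) (f' x) f'') x :=
  ((hasDerivAt_evalEval (derivative p) hf).mul hf').add (hasDerivAt_evalEval (derivX p) hf)

theorem totalDeriv_eq_zero {p : 𝕜[X][Y]} {f' : 𝕜} (hp : ∀ᶠ y in 𝓝 x, p.evalEval y (f y) = 0)
    (hf : HasDerivAt f f' x) : totalDeriv p x (f x) f' = 0 :=
  (hasDerivAt_evalEval p hf).unique ((hasDerivAt_const x 0).congr_of_eventuallyEq hp)

theorem secondTotalDeriv_eq_zero {p : 𝕜[X][Y]} {f' : 𝕜 → 𝕜} {f'' : 𝕜}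
    (hp : ∀ᶠ y in 𝓝 x, p.evalEval y (f y) = 0)
    (hf : ∀ᶠ y in 𝓝 x, HasDerivAt f (f' y) y) (hf' : HasDerivAt f' f'' x) :
    secondTotalDeriv p x (f x) (f' x) f'' = 0 := by
  have hfirst : ∀ᶠ y in 𝓝 x, totalDeriv p y (f y) (f' y) = 0 :=
    (hp.eventually_nhds.and hf).mono fun _ h => totalDeriv_eq_zero h.1 h.2
  exact (hasDerivAt_totalDeriv p hf.self_of_nhds hf').unique
    ((hasDerivAt_const x 0).congr_of_eventuallyEq hfirst)

end Calculus

end Polynomial.Bivariate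

theorem Polynomial.rootMultiplicity_X_sub_C_mul_eq_one {R : Type*} [CommRing R] [IsDomain R]
    {a : R} {q : R[X]} (hq : q.eval a ≠ 0) : ((X - C a) * q).rootMultiplicity a = 1 := by
  have hq0 : q ≠ 0 := fun h => hq (by rw [h, eval_zero])
  rw [rootMultiplicity_mul (mul_ne_zero (X_sub_C_ne_zero a) hq0), rootMultiplicity_X_sub_C_self,
    rootMultiplicity_eq_zero hq]

open Polynomial.Bivariate

/-- `F(x, λ)`, as a polynomial in `λ` whose coefficients are polynomials in `x`. -/
noncomputable def iteratedClawCharPoly : ℝ[X][Y] :=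
  Y ^ 3 - C (2 * (3 * X + 28 * X ^ 2)) * Y ^ 2 + C (16 * (-3 * X ^ 2 - 12 * X ^ 3 + 4 * X ^ 4)) * Y
    + C (3072 * X ^ 6)

theorem evalEval_iteratedClawCharPoly (x l : ℝ) :
    iteratedClawCharPoly.evalEval x l = l ^ 3 - 2 * (3 * x + 28 * x ^ 2) * l ^ 2 +
      16 * (-3 * x ^ 2 - 12 * x ^ 3 + 4 * x ^ 4) * l + 3072 * x ^ 6 := by
  simp only [iteratedClawCharPoly, evalEval_add, evalEval_sub, evalEval_mul, evalEval_C,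
    evalEval_pow, evalEval_X]
  simp

theorem totalDeriv_iteratedClawCharPoly (d : ℝ) :
    totalDeriv iteratedClawCharPoly 1 64 d = 4176 * d - 491520 := by
  simp only [totalDeriv, iteratedClawCharPoly, map_add, map_sub, derivative_C_mul_X_pow,
    derivative_X_pow, derivative_C_mul_X, derivative_C, derivX_C_mul_X_pow, derivX_C_mul_X,
    derivX_X_pow, derivX_C, evalEval_add, evalEval_sub, evalEval_mul, evalEval_C, evalEval_pow,
    evalEval_X, evalEval_zero]
  norm_num
  ring

theorem secondTotalDeriv_iteratedClawCharPoly (d d' : ℝ) :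
    secondTotalDeriv iteratedClawCharPoly 1 64 d d' =
      260 * d ^ 2 - 31040 * d + 4176 * d' - 397312 := by
  simp only [secondTotalDeriv, totalDeriv, iteratedClawCharPoly, map_add, map_sub, map_zero,
    derivative_C_mul_X_pow, derivative_X_pow, derivative_C_mul_X, derivative_C,
    derivX_C_mul_X_pow, derivX_C_mul_X, derivX_X_pow, derivX_C, evalEval_add, evalEval_sub,
    evalEval_mul, evalEval_C, evalEval_pow, evalEval_X, evalEval_zero]
  norm_num
  ring

theorem derivs_at_one_of_iteratedClawCharPoly_root {lam : ℝ → ℝ}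
    (hlam : ∀ᶠ x in 𝓝 1, DifferentiableAt ℝ lam x) (hlam' : DifferentiableAt ℝ (deriv lam) 1)
    (h1 : lam 1 = 64) (hroot : ∀ᶠ x in 𝓝 1, iteratedClawCharPoly.evalEval x (lam x) = 0) :
    deriv lam 1 = 10240 / 87 ∧ deriv (deriv lam) 1 = 212324608 / 1975509 := by
  have hfirst := totalDeriv_eq_zero hroot hlam.self_of_nhds.hasDerivAt
  have hsecond := secondTotalDeriv_eq_zero hroot (hlam.mono fun _ h => h.hasDerivAt)
    hlam'.hasDerivAt
  rw [h1, totalDeriv_iteratedClawCharPoly] at hfirst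
  rw [h1, secondTotalDeriv_iteratedClawCharPoly] at hsecond
  have hd1 : deriv lam 1 = 10240 / 87 := by linarith
  rw [hd1] at hsecond
  exact ⟨hd1, by linarith⟩

theorem X_pow_three_sub_62_mul_X_sq_sub_176_mul_X_add_3072_eq :
    (X ^ 3 - C 62 * X ^ 2 - C 176 * X + C 3072 : ℂ[X]) =
      (X - C 64) * ((X - C 6) * (X - C (-8))) := by
  simp only [map_neg, map_ofNat]
  ring

theorem iterated_claw_euler_genus_parameters
    (F : ℝ → ℝ → ℝ)
    (hF : ∀ x l : ℝ, F x l = l ^ 3 - 2 * (3 * x + 28 * x ^ 2) * l ^ 2 +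
      16 * (-3 * x ^ 2 - 12 * x ^ 3 + 4 * x ^ 4) * l + 3072 * x ^ 6)
    (Q : Polynomial ℂ)
    (hQ : Q = X ^ 3 - Polynomial.C 62 * X ^ 2 - Polynomial.C 176 * X + Polynomial.C 3072) :
    (∀ l : ℝ, F 1 l = (l - 64) * (l - 6) * (l + 8)) ∧
    Q.rootMultiplicity 64 = 1 ∧
    (∀ μ : ℂ, Q.eval μ = 0 → μ ≠ 64 → ‖μ‖ < 64) ∧
    (∀ (δ : ℝ), 0 < δ → ∀ lam : ℝ → ℝ,
      (∀ x ∈ Set.Ioo (1 - δ) (1 + δ), DifferentiableAt ℝ lam x) →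
      (∀ x ∈ Set.Ioo (1 - δ) (1 + δ), DifferentiableAt ℝ (deriv lam) x) →
      lam 1 = 64 →
      (∀ x ∈ Set.Ioo (1 - δ) (1 + δ), F x (lam x) = 0) →
      deriv lam 1 / 64 = 160 / 87 ∧
      (-(deriv lam 1) ^ 2 + 64 * deriv (deriv lam) 1 + 64 * deriv lam 1) / 64 ^ 2 =
        269092 / 1975509 ∧
      0 < (269092 : ℝ) / 1975509) := by
  rw [X_pow_three_sub_62_mul_X_sq_sub_176_mul_X_add_3072_eq] at hQ
  subst hQ
  refine ⟨fun l => by rw [hF]; ring, rootMultiplicity_X_sub_C_mul_eq_one (by norm_num), ?_, ?_⟩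
  · intro μ hμ hne
    simp only [eval_mul, eval_sub, eval_X, eval_C, mul_eq_zero, sub_eq_zero] at hμ
    rcases hμ with h | h | h
    · exact absurd h hne
    all_goals norm_num [h]
  · intro δ hδ lam hd1 hd2 hl1 hzero
    have hU : Ioo (1 - δ) (1 + δ) ∈ 𝓝 (1 : ℝ) := Ioo_mem_nhds (by linarith) (by linarith)
    obtain ⟨h1, h2⟩ := derivs_at_one_of_iteratedClawCharPoly_root (eventually_of_mem hU hd1)
      (hd2 1 (mem_of_mem_nhds hU)) hl1
      (eventually_of_mem hU fun x hx => by rw [evalEval_iteratedClawCharPoly, ← hF, hzero x hx])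
    rw [h1, h2]
    norm_num
end

section
/- Let F(x,λ) = λ⁴ − (1+30x)·λ³ + 42(−x+4x²)·λ² + 72(x²+14x³)·λ − 1728x⁴. If δ > 0 and λ : (1−δ, 1+δ) → ℝ is twice differentiable with λ(1) = 24 and F(x, λ(x)) = 0 for all x ∈ (1−δ, 1+δ), then e := λ′(1)/24 = 34/41 and v := (−λ′(1)² + 24·λ″(1) + 24·λ′(1))/24² = 4816/68921 > 0. -/
/-!
Implicit differentiation: `F` vanishes along the graph `t ↦ (t, λ t)`, so the first and second
total derivatives of `t ↦ F(t, λ t)` vanish at `t = 1`. With the partial derivatives of `F` at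
`(1, 24)` these two equations give `λ'(1) = 816/41` and `λ''(1) = -118608/68921`.
-/

open Set

open Filter Topology MvPolynomial

theorem HasDerivAt.eq_zero_of_eventuallyEq_zero {𝕜 E : Type*} [NontriviallyNormedField 𝕜]
    [NormedAddCommGroup E] [NormedSpace 𝕜 E] {f : 𝕜 → E} {f' : E} {x : 𝕜}
    (hf : HasDerivAt f f' x) (h : f =ᶠ[𝓝 x] 0) : f' = 0 :=
  hf.unique ((hasDerivAt_const x 0).congr_of_eventuallyEq h)

namespace MvPolynomial

@[simp]
theorem pderiv_ofNat {σ R : Type*} [CommSemiring R] (i : σ) (n : ℕ) [n.AtLeastTwo] :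
    pderiv i (ofNat(n) : MvPolynomial σ R) = 0 :=
  (pderiv i).map_natCast n

variable {𝕜 : Type*} [NontriviallyNormedField 𝕜]

theorem hasDerivAt_eval_comp {σ : Type*} [Fintype σ] (p : MvPolynomial σ 𝕜)
    {γ : σ → 𝕜 → 𝕜} {γ' : σ → 𝕜} {t : 𝕜} (hγ : ∀ i, HasDerivAt (γ i) (γ' i) t) :
    HasDerivAt (fun s => eval (fun i => γ i s) p)
      (∑ i, eval (fun i => γ i t) (pderiv i p) * γ' i) t := by
  classical
  induction p using MvPolynomial.induction_on with
  | C a => simpa using hasDerivAt_const t a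
  | add p q hp hq => simpa [add_mul, Finset.sum_add_distrib] using hp.fun_add hq
  | mul_X p n hp =>
    simp only [map_mul, eval_X]
    refine (hp.fun_mul (hγ n)).congr_deriv ?_
    simp only [Derivation.leibniz, pderiv_X, Pi.single_apply, smul_eq_mul, map_add, map_mul,
      eval_X, add_mul, Finset.sum_add_distrib]
    simp [Finset.mul_sum, mul_comm, mul_left_comm, add_comm]

variable (p : MvPolynomial (Fin 2) 𝕜) {f : 𝕜 → 𝕜} {x : 𝕜}

theorem hasDerivAt_eval_graph {f' : 𝕜} (hf : HasDerivAt f f' x) :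
    HasDerivAt (fun t => eval ![t, f t] p)
      (eval ![x, f x] (pderiv 0 p) + eval ![x, f x] (pderiv 1 p) * f') x := by
  have hγ : ∀ i, HasDerivAt (fun t => ![t, f t] i) (![1, f'] i) x := by
    intro i
    fin_cases i
    · exact hasDerivAt_id x
    · exact hf
  simpa [Fin.sum_univ_two] using p.hasDerivAt_eval_comp hγ

theorem eval_pderiv_graph_eq_zero {f' : 𝕜} (hzero : ∀ᶠ t in 𝓝 x, eval ![t, f t] p = 0)
    (hf : HasDerivAt f f' x) :
    eval ![x, f x] (pderiv 0 p) + eval ![x, f x] (pderiv 1 p) * f' = 0 :=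
  (p.hasDerivAt_eval_graph hf).eq_zero_of_eventuallyEq_zero hzero

theorem eval_pderiv_pderiv_graph_eq_zero {f' : 𝕜 → 𝕜} {f'' : 𝕜}
    (hzero : ∀ᶠ t in 𝓝 x, eval ![t, f t] p = 0) (hf : ∀ᶠ t in 𝓝 x, HasDerivAt f (f' t) t)
    (hf' : HasDerivAt f' f'' x) :
    eval ![x, f x] (pderiv 0 (pderiv 0 p)) +
      (eval ![x, f x] (pderiv 1 (pderiv 0 p)) + eval ![x, f x] (pderiv 0 (pderiv 1 p))) * f' x +
      eval ![x, f x] (pderiv 1 (pderiv 1 p)) * f' x ^ 2 + eval ![x, f x] (pderiv 1 p) * f'' = 0 := by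
  have hfx : HasDerivAt f (f' x) x := hf.self_of_nhds
  have hfirst : ∀ᶠ t in 𝓝 x,
      eval ![t, f t] (pderiv 0 p) + eval ![t, f t] (pderiv 1 p) * f' t = 0 :=
    (hzero.eventually_nhds.and hf).mono fun _ ⟨h0, ht⟩ => p.eval_pderiv_graph_eq_zero h0 ht
  have hsecond := ((pderiv 0 p).hasDerivAt_eval_graph hfx).fun_add
    (((pderiv 1 p).hasDerivAt_eval_graph hfx).fun_mul hf')
  linear_combination hsecond.eq_zero_of_eventuallyEq_zero hfirst

end MvPolynomial

noncomputable def gridCharPoly : MvPolynomial (Fin 2) ℝ :=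
  X 1 ^ 4 - (1 + 30 * X 0) * X 1 ^ 3 + 42 * (-X 0 + 4 * X 0 ^ 2) * X 1 ^ 2 +
    72 * (X 0 ^ 2 + 14 * X 0 ^ 3) * X 1 - 1728 * X 0 ^ 4

theorem eval_gridCharPoly (x l : ℝ) :
    eval ![x, l] gridCharPoly = l ^ 4 - (1 + 30 * x) * l ^ 3 +
      42 * (-x + 4 * x ^ 2) * l ^ 2 + 72 * (x ^ 2 + 14 * x ^ 3) * l - 1728 * x ^ 4 := by
  simp [gridCharPoly]

theorem eval_pderiv_gridCharPoly :
    eval ![1, 24] (pderiv 0 gridCharPoly) = -176256 ∧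
    eval ![1, 24] (pderiv 1 gridCharPoly) = 8856 ∧
    eval ![1, 24] (pderiv 0 (pderiv 0 gridCharPoly)) = 321408 ∧
    eval ![1, 24] (pderiv 1 (pderiv 0 gridCharPoly)) = -34560 ∧
    eval ![1, 24] (pderiv 0 (pderiv 1 gridCharPoly)) = -34560 ∧
    eval ![1, 24] (pderiv 1 (pderiv 1 gridCharPoly)) = 2700 := by
  refine ⟨?_, ?_, ?_, ?_, ?_, ?_⟩ <;> norm_num [gridCharPoly, pderiv_X]

theorem grid_genus_parameters
    (F : ℝ → ℝ → ℝ)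
    (hF : ∀ x l : ℝ, F x l = l ^ 4 - (1 + 30 * x) * l ^ 3 +
      42 * (-x + 4 * x ^ 2) * l ^ 2 + 72 * (x ^ 2 + 14 * x ^ 3) * l - 1728 * x ^ 4) :
    ∀ (δ : ℝ), 0 < δ → ∀ lam : ℝ → ℝ,
      (∀ x ∈ Set.Ioo (1 - δ) (1 + δ), DifferentiableAt ℝ lam x) →
      (∀ x ∈ Set.Ioo (1 - δ) (1 + δ), DifferentiableAt ℝ (deriv lam) x) →
      lam 1 = 24 →
      (∀ x ∈ Set.Ioo (1 - δ) (1 + δ), F x (lam x) = 0) →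
      deriv lam 1 / 24 = 34 / 41 ∧
      (-(deriv lam 1) ^ 2 + 24 * deriv (deriv lam) 1 + 24 * deriv lam 1) / 24 ^ 2 =
        4816 / 68921 ∧
      0 < (4816 : ℝ) / 68921 := by
  intro δ hδ lam hlam hlam' h24 hroot
  have hU : Ioo (1 - δ) (1 + δ) ∈ 𝓝 (1 : ℝ) := Ioo_mem_nhds (by linarith) (by linarith)
  have hzero : ∀ᶠ t in 𝓝 1, eval ![t, lam t] gridCharPoly = 0 :=
    eventually_of_mem hU fun t ht => by rw [eval_gridCharPoly, ← hF]; exact hroot t ht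
  have hderiv : ∀ᶠ t in 𝓝 1, HasDerivAt lam (deriv lam t) t :=
    eventually_of_mem hU fun t ht => (hlam t ht).hasDerivAt
  have h1 := gridCharPoly.eval_pderiv_graph_eq_zero hzero hderiv.self_of_nhds
  have h2 := gridCharPoly.eval_pderiv_pderiv_graph_eq_zero hzero hderiv
    (hlam' 1 (mem_of_mem_nhds hU)).hasDerivAt
  obtain ⟨hFx, hFl, hFxx, hFlx, hFxl, hFll⟩ := eval_pderiv_gridCharPoly
  rw [h24, hFx, hFl] at h1
  rw [h24, hFl, hFxx, hFlx, hFxl, hFll] at h2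
  have hb : deriv lam 1 = 816 / 41 := by linarith
  have hc : deriv (deriv lam) 1 = -118608 / 68921 := by rw [hb] at h2; linarith
  refine ⟨by rw [hb]; norm_num, by rw [hb, hc]; norm_num, by norm_num⟩
end

section
/- Let F(x,λ) = λ⁷ − (12x+4)λ⁶ + (12x²+34x+5)λ⁵ + (240x³+20x²−26x−2)λ⁴ − 4x(80x³+128x²+14x−1)λ³ − 16x²(112x³+8x²−14x−1)λ² + 128x⁴(8x²+18x+3)λ + 2048x⁶(2x+1), and define λ₁(x) := 2x + 1 + √(20x²+4x+1) for x ≥ 0. Then F(x, λ₁(x)) = 0 for all x ≥ 0; in particular D := λ₁(1) = 8 is a root of F(1,·) strictly exceeding the modulus of every other complex root of F(1,·), since F(1,λ) = (λ+2)²(λ−3)(λ−4)(λ−8)(λ−(5−√89)/2)(λ−(5+√89)/2). Moreover e := λ₁′(1)/D = 4/5 and v := (−λ₁′(1)² + D·λ₁″(1) + D·λ₁′(1))/D² = 22/125 > 0. -/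
/-!
`F(x, λ)` is divisible by `λ² - (4x + 2)λ - 16x²`, whose larger root is `λ₁(x)`. At `x = 1` the
cofactor splits as `(λ + 2)(λ - 3)(λ - 4)(λ² - 5λ - 16)`, and a root of the last factor has modulus
`r` with `r² ≤ 5r + 16`, hence `r < 8`. For a quadratic `q = at² + bt + c` one has
`(√q)'' = (4ac - b²) / (4q√q)`, which for `q = 20x² + 4x + 1` at `x = 1` gives `λ₁''(1) = 16/125`.
-/

open Topology

def ladderCharPoly {R : Type*} [CommRing R] (x l : R) : R :=
  l ^ 7 - (12 * x + 4) * l ^ 6 + (12 * x ^ 2 + 34 * x + 5) * l ^ 5 +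
    (240 * x ^ 3 + 20 * x ^ 2 - 26 * x - 2) * l ^ 4 -
    4 * x * (80 * x ^ 3 + 128 * x ^ 2 + 14 * x - 1) * l ^ 3 -
    16 * x ^ 2 * (112 * x ^ 3 + 8 * x ^ 2 - 14 * x - 1) * l ^ 2 +
    128 * x ^ 4 * (8 * x ^ 2 + 18 * x + 3) * l + 2048 * x ^ 6 * (2 * x + 1)

section CharPoly

variable {R : Type*} [CommRing R]

theorem ladderCharPoly_eq_zero_of_sq_eq {x l : R} (h : l ^ 2 = (4 * x + 2) * l + 16 * x ^ 2) :
    ladderCharPoly x l = 0 := by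
  unfold ladderCharPoly
  linear_combination (l ^ 5 - (8 * x + 2) * l ^ 4 + (1 + 10 * x - 4 * x ^ 2) * l ^ 3 +
    (96 * x ^ 3 + 20 * x ^ 2 - 2 * x) * l ^ 2 - (80 * x ^ 3 + 8 * x ^ 2) * l -
    256 * x ^ 5 - 128 * x ^ 4) * h

theorem ladderCharPoly_one (l : R) :
    ladderCharPoly 1 l = (l + 2) ^ 2 * (l - 3) * (l - 4) * (l - 8) * (l ^ 2 - 5 * l - 16) := by
  unfold ladderCharPoly
  ring

end CharPoly

theorem Complex.norm_lt_of_sq_eq_mul_add {z a b : ℂ} {r : ℝ} (hr₀ : 0 < r)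
    (hr : ‖a‖ * r + ‖b‖ < r ^ 2) (hz : z ^ 2 = a * z + b) : ‖z‖ < r := by
  have hroot : ‖z‖ ^ 2 ≤ ‖a‖ * ‖z‖ + ‖b‖ := by
    calc ‖z‖ ^ 2 = ‖a * z + b‖ := by rw [← norm_pow, hz]
      _ ≤ ‖a‖ * ‖z‖ + ‖b‖ := by simpa only [norm_mul] using norm_add_le (a * z) b
  have ha : ‖a‖ < r := by nlinarith [norm_nonneg b]
  by_contra! hge
  nlinarith [mul_nonneg (sub_nonneg.2 hge) (by linarith : 0 ≤ ‖z‖ + r - ‖a‖)]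

theorem norm_lt_eight_of_ladderCharPoly_one_eq_zero {μ : ℂ} (hμ : ladderCharPoly 1 μ = 0)
    (hμ8 : μ ≠ 8) : ‖μ‖ < 8 := by
  rw [ladderCharPoly_one] at hμ
  simp only [mul_eq_zero, pow_eq_zero_iff two_ne_zero] at hμ
  rcases hμ with ((((h | h) | h) | h) | h)
  · rw [eq_neg_of_add_eq_zero_left h]; norm_num
  · rw [sub_eq_zero.mp h]; norm_num
  · rw [sub_eq_zero.mp h]; norm_num
  · exact absurd (sub_eq_zero.mp h) hμ8
  · exact Complex.norm_lt_of_sq_eq_mul_add (a := 5) (b := 16) (by norm_num) (by norm_num)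
      (by linear_combination h)

section SqrtQuadratic

variable (a b c : ℝ)

theorem hasDerivAt_sqrt_quadratic {x : ℝ} (hx : a * x ^ 2 + b * x + c ≠ 0) :
    HasDerivAt (fun t ↦ √(a * t ^ 2 + b * t + c))
      ((2 * a * x + b) / (2 * √(a * x ^ 2 + b * x + c))) x := by
  have hq : HasDerivAt (fun t ↦ a * t ^ 2 + b * t + c) (2 * a * x + b) x :=
    ((((hasDerivAt_pow 2 x).const_mul a).add ((hasDerivAt_id x).const_mul b)).add_const c
      ).congr_deriv (by simp; ring)
  exact hq.sqrt hx

theorem hasDerivAt_deriv_sqrt_quadratic {x : ℝ} (hx : 0 < a * x ^ 2 + b * x + c) :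
    HasDerivAt (deriv fun t ↦ √(a * t ^ 2 + b * t + c))
      ((4 * a * c - b ^ 2) / (4 * (a * x ^ 2 + b * x + c) * √(a * x ^ 2 + b * x + c))) x := by
  have hderiv : (deriv fun t ↦ √(a * t ^ 2 + b * t + c)) =ᶠ[𝓝 x]
      fun t ↦ (2 * a * t + b) / (2 * √(a * t ^ 2 + b * t + c)) := by
    have hopen : IsOpen {t : ℝ | 0 < a * t ^ 2 + b * t + c} :=
      isOpen_lt continuous_const (by fun_prop)
    filter_upwards [hopen.mem_nhds hx] with t ht
    exact (hasDerivAt_sqrt_quadratic a b c ht.ne').deriv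
  have hnum : HasDerivAt (fun t ↦ 2 * a * t + b) (2 * a) x :=
    (((hasDerivAt_id x).const_mul (2 * a)).add_const b).congr_deriv (by simp)
  have hden := (hasDerivAt_sqrt_quadratic a b c hx.ne').const_mul 2
  have hs : 0 < √(a * x ^ 2 + b * x + c) := Real.sqrt_pos.mpr hx
  have hsq : √(a * x ^ 2 + b * x + c) ^ 2 = a * x ^ 2 + b * x + c := Real.sq_sqrt hx.le
  refine ((hnum.div hden (by positivity)).congr_of_eventuallyEq hderiv).congr_deriv ?_
  generalize √(a * x ^ 2 + b * x + c) = s at hs hsq ⊢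
  rw [← hsq]
  field_simp
  linear_combination 16 * a * hsq

theorem deriv_affine_add_sqrt_quadratic (m k : ℝ) {x : ℝ} (hx : a * x ^ 2 + b * x + c ≠ 0) :
    deriv (fun t ↦ m * t + k + √(a * t ^ 2 + b * t + c)) x =
      m + deriv (fun t ↦ √(a * t ^ 2 + b * t + c)) x := by
  have hsqrt := hasDerivAt_sqrt_quadratic a b c hx
  have hlin : HasDerivAt (fun t ↦ m * t + k) m x :=
    (((hasDerivAt_id x).const_mul m).add_const k).congr_deriv (mul_one m)
  rw [hsqrt.deriv]
  exact (hlin.add hsqrt).deriv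

end SqrtQuadratic

theorem ladders_euler_genus_parameters
    (F : ℝ → ℝ → ℝ)
    (hF : ∀ x l : ℝ, F x l = l ^ 7 - (12 * x + 4) * l ^ 6 +
      (12 * x ^ 2 + 34 * x + 5) * l ^ 5 +
      (240 * x ^ 3 + 20 * x ^ 2 - 26 * x - 2) * l ^ 4 -
      4 * x * (80 * x ^ 3 + 128 * x ^ 2 + 14 * x - 1) * l ^ 3 -
      16 * x ^ 2 * (112 * x ^ 3 + 8 * x ^ 2 - 14 * x - 1) * l ^ 2 +
      128 * x ^ 4 * (8 * x ^ 2 + 18 * x + 3) * l + 2048 * x ^ 6 * (2 * x + 1))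
    (Fc : ℂ → ℂ)
    (hFc : ∀ l : ℂ, Fc l = l ^ 7 - (12 + 4) * l ^ 6 +
      (12 + 34 + 5) * l ^ 5 + (240 + 20 - 26 - 2) * l ^ 4 -
      4 * (80 + 128 + 14 - 1) * l ^ 3 - 16 * (112 + 8 - 14 - 1) * l ^ 2 +
      128 * (8 + 18 + 3) * l + 2048 * (2 + 1))
    (lam : ℝ → ℝ)
    (hlam : ∀ x : ℝ, lam x = 2 * x + 1 + Real.sqrt (20 * x ^ 2 + 4 * x + 1)) :
    (∀ x : ℝ, 0 ≤ x → F x (lam x) = 0) ∧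
    lam 1 = 8 ∧
    (∀ l : ℝ, F 1 l = (l + 2) ^ 2 * (l - 3) * (l - 4) * (l - 8) *
      (l - (5 - Real.sqrt 89) / 2) * (l - (5 + Real.sqrt 89) / 2)) ∧
    (∀ μ : ℂ, Fc μ = 0 → μ ≠ 8 → ‖μ‖ < 8) ∧
    deriv lam 1 / 8 = 4 / 5 ∧
    (-(deriv lam 1) ^ 2 + 8 * deriv (deriv lam) 1 + 8 * deriv lam 1) / 8 ^ 2 = 22 / 125 ∧
    0 < (22 : ℝ) / 125 := by
  have hq_pos : ∀ x : ℝ, 0 < 20 * x ^ 2 + 4 * x + 1 := fun x ↦ by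
    nlinarith [sq_nonneg (10 * x + 1)]
  have hsqrt25 : √(20 * 1 ^ 2 + 4 * 1 + 1 : ℝ) = 5 := by
    rw [show (20 * 1 ^ 2 + 4 * 1 + 1 : ℝ) = 5 ^ 2 by norm_num, Real.sqrt_sq (by norm_num)]
  have hderiv : deriv lam = fun t ↦ 2 + deriv (fun t ↦ √(20 * t ^ 2 + 4 * t + 1)) t := by
    rw [funext hlam]
    exact funext fun t ↦ deriv_affine_add_sqrt_quadratic 20 4 1 2 1 (hq_pos t).ne'
  have hd1 : deriv lam 1 = 32 / 5 := by
    rw [congrFun hderiv 1, (hasDerivAt_sqrt_quadratic 20 4 1 (hq_pos 1).ne').deriv, hsqrt25]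
    norm_num
  have hd2 : deriv (deriv lam) 1 = 16 / 125 := by
    rw [hderiv, deriv_const_add, (hasDerivAt_deriv_sqrt_quadratic 20 4 1 (hq_pos 1)).deriv,
      hsqrt25]
    norm_num
  have hF_eq : F = ladderCharPoly := funext₂ hF
  refine ⟨fun x _ ↦ ?_, by rw [hlam, hsqrt25]; norm_num, fun l ↦ ?_, fun μ hμ ↦ ?_,
    by rw [hd1]; norm_num, by rw [hd1, hd2]; norm_num, by norm_num⟩
  · rw [hF_eq, hlam]
    exact ladderCharPoly_eq_zero_of_sq_eq (by linear_combination Real.sq_sqrt (hq_pos x).le)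
  · rw [hF_eq, ladderCharPoly_one]
    linear_combination (l + 2) ^ 2 * (l - 3) * (l - 4) * (l - 8) / 4 *
      Real.sq_sqrt (by norm_num : (0 : ℝ) ≤ 89)
  · exact norm_lt_eight_of_ladderCharPoly_one_eq_zero (by rw [← hμ, hFc, ladderCharPoly]; ring)
end
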